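/- Matching step completeness counterexample (Proposition step_twist, lseg/lseg case): suppose s(x)=s(x'), s(x)≠s(y), s(x')≠s(z), s(y)≠s(z), and s(z) is distinct from s(x) and s(y). Then there exists a heap h' such that s,h' ⊨ lseg(x,y) ∗ lseg(y,z) but s,h' ⊭ lseg(x',z). In particular h' = {s(x) ↦ s(z), s(z) ↦ s(y), s(y) ↦ s(z)} restricted appropriately works when these three addresses are pairwise distinct. -/

import Mathlib

def Heap := ℤ → Option ℤ
def Stack := String → ℤ

def hemp : Heap := fun _ => none
def hsingle (a v : ℤ) : Heap := fun l => if l = a then some v else none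
def hdisj (h₁ h₂ : Heap) : Prop := ∀ l, h₁ l = none ∨ h₂ l = none
def hunion (h₁ h₂ : Heap) : Heap := fun l =>
  match h₁ l with
  | some v => some v
  | none => h₂ l
def hdom (h : Heap) : Set ℤ := {l | h l ≠ none}

/-- Acyclic list segment: `Lseg a b h` means `h` is a list segment from `a` to `b`. -/
inductive Lseg : ℤ → ℤ → Heap → Prop
  | nil (a : ℤ) : Lseg a a hemp
  | cons {a b c : ℤ} {h : Heap} (hne : a ≠ b) (hfresh : h a = none)
      (ht : Lseg c b h) : Lseg a b (hunion (hsingle a c) h)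

/-- Spatial predicates. -/
inductive SP where
  | emp : SP
  | next (x y : String) : SP
  | lseg (x y : String) : SP

/-- Satisfaction of a single spatial predicate. -/
def sat (s : Stack) (h : Heap) : SP → Prop
  | .emp => h = hemp
  | .next x y => h = hsingle (s x) (s y)
  | .lseg x y => Lseg (s x) (s y) h

/-- Satisfaction of a spatial conjunction (list of predicates). -/
def satList (s : Stack) (h : Heap) : List SP → Prop
  | [] => h = hemp
  | S :: Sg => ∃ h₁ h₂, hdisj h₁ h₂ ∧ h = hunion h₁ h₂ ∧ sat s h₁ S ∧ satList s h₂ Sg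

/-- Emptiness condition of a spatial predicate. -/
def emptyCond (s : Stack) : SP → Prop
  | .emp => True
  | .next _ _ => False
  | .lseg x y => s x = s y

/-- Address of a spatial predicate (dummy value 0 for `emp`, which is always empty). -/
def addrVal (s : Stack) : SP → ℤ
  | .emp => 0
  | .next x _ => s x
  | .lseg x _ => s x

def collide (s : Stack) (S S' : SP) : Prop :=
  ¬ emptyCond s S ∧ ¬ emptyCond s S' ∧ addrVal s S = addrVal s S'

def wellFormed (s : Stack) (Sg : List SP) : Prop :=
  List.Pairwise (fun S S' => ¬ collide s S S') Sg

/-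
Take `h' = {x ↦ z, z ↦ y, y ↦ z}`. It splits as the segment `x ↦ z ↦ y` and the cell `y ↦ z`. But
segments are acyclic: one from `x` to `z` starting with the cell `x ↦ z` has to stop right there, so it
cannot cover the cell at `y`.
-/

lemma hunion_hemp (h : Heap) : hunion h hemp = h := by
  funext l
  unfold hunion hemp
  cases h l <;> rfl

lemma hdisj_hsingle_of_apply_eq_none {h : Heap} {a : ℤ} (ha : h a = none) (v : ℤ) :
    hdisj h (hsingle a v) := by
  intro l
  by_cases hl : l = a
  · exact Or.inl (hl ▸ ha)
  · exact Or.inr (if_neg hl)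

namespace Lseg

lemma eq_hemp_of_self {a : ℤ} {h : Heap} (H : Lseg a a h) : h = hemp := by
  cases H with
  | nil => rfl
  | cons hne => exact absurd rfl hne

lemma single {a b : ℤ} (hab : a ≠ b) : Lseg a b (hsingle a b) := by
  simpa only [hunion_hemp] using Lseg.cons hab rfl (Lseg.nil b)

lemma eq_hsingle_of_apply_eq {a b : ℤ} {h : Heap} (H : Lseg a b h) (ha : h a = some b) :
    h = hsingle a b := by
  cases H with
  | nil => exact absurd ha (by simp [hemp])
  | @cons _ _ c _ _ _ ht =>
    obtain rfl : c = b := by simpa [hunion, hsingle] using ha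
    rw [ht.eq_hemp_of_self, hunion_hemp]

end Lseg

theorem stmt15_general (s : Stack) (x x' y z : String)
    (hcol : s x = s x') (hxy : s x ≠ s y)
    (hyz : s y ≠ s z) (hzx : s z ≠ s x) (hyx : s y ≠ s x) :
    ∃ h' : Heap,
      (∃ h₁ h₂, hdisj h₁ h₂ ∧ h' = hunion h₁ h₂ ∧
        sat s h₁ (.lseg x y) ∧ sat s h₂ (.lseg y z)) ∧
      ¬ sat s h' (.lseg x' z) := by
  set h₁ := hunion (hsingle (s x) (s z)) (hsingle (s z) (s y))
  set h' := hunion h₁ (hsingle (s y) (s z))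
  have hseg : Lseg (s x) (s y) h₁ := Lseg.cons hxy (if_neg hzx.symm) (Lseg.single hyz.symm)
  have hsep : hdisj h₁ (hsingle (s y) (s z)) :=
    hdisj_hsingle_of_apply_eq_none (by simp [h₁, hunion, hsingle, hyx, hyz]) _
  refine ⟨h', ⟨h₁, _, hsep, rfl, hseg, Lseg.single hyz⟩, fun H => ?_⟩
  have hx : h' (s x') = some (s z) := by simp [h', h₁, hunion, hsingle, ← hcol]
  have hy := congrFun ((H : Lseg _ _ h').eq_hsingle_of_apply_eq hx) (s y)
  simp [h', h₁, hunion, hsingle, hyx, hyz, ← hcol] at hy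

theorem stmt15 (s : Stack) (x x' y z : String)
    (hcol : s x = s x') (hxy : s x ≠ s y) (hxz : s x' ≠ s z)
    (hyz : s y ≠ s z) (hzx : s z ≠ s x) (hyx : s y ≠ s x) :
    ∃ h' : Heap,
      (∃ h₁ h₂, hdisj h₁ h₂ ∧ h' = hunion h₁ h₂ ∧
        sat s h₁ (.lseg x y) ∧ sat s h₂ (.lseg y z)) ∧
      ¬ sat s h' (.lseg x' z) :=
  stmt15_general s x x' y z hcol hxy hyz hzx hyx
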